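/- For any n ≥ 1 and 0 ≤ r < n, (Σ_k |N_r(n,k)|) − (Σ_k |S̄_r(n,k)|) = (1/n) · Σ_{d | n, d even} 2^{n/d} · c_d(r); in particular this difference is 0 when n is odd. -/

import Mathlib

open Finset

/-- Number of ones in a cyclic binary word of length `n`. -/
noncomputable def onesCount (n : ℕ) (w : ZMod n → Bool) : ℕ :=
  Nat.card {i : ZMod n // w i = true}

/-- The co-period of a cyclic binary word `w` of length `n`: the size of its
stabilizer under cyclic rotation (equivalently, the `j` such that `w = v^j`
with `v` primitive). -/
noncomputable def coPeriod (n : ℕ) (w : ZMod n → Bool) : ℕ :=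
  Nat.card {t : ZMod n // ∀ i, w (i + t) = w i}

/-- Two cyclic words are related iff they are cyclic rotations of each other. -/
def rotRel (n : ℕ) (u v : ZMod n → Bool) : Prop :=
  ∃ t : ZMod n, ∀ i, u i = v (i + t)

theorem rotRel_equivalence (n : ℕ) : Equivalence (rotRel n) := by
  constructor
  · exact fun u => ⟨0, fun i => by rw [add_zero]⟩
  · rintro u v ⟨t, h⟩
    exact ⟨-t, fun i => by rw [h, neg_add_cancel_right]⟩
  · rintro u v w ⟨t1, h1⟩ ⟨t2, h2⟩
    exact ⟨t1 + t2, fun i => by rw [h1, h2, ← add_assoc]⟩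

def rotSetoid (n : ℕ) : Setoid (ZMod n → Bool) := ⟨rotRel n, rotRel_equivalence n⟩

/-- The number of binary necklaces of length `n` with `k` ones. -/
noncomputable def NCard (n k : ℕ) : ℕ :=
  Nat.card (Quotient (Setoid.comap
    (Subtype.val : {w : ZMod n → Bool // onesCount n w = k} → _) (rotSetoid n)))

/-- The number of binary necklaces of length `n` with `k` ones whose co-period divides `r`. -/
noncomputable def NrCard (n k r : ℕ) : ℕ :=
  Nat.card (Quotient (Setoid.comap
    (Subtype.val : {w : ZMod n → Bool // onesCount n w = k ∧ coPeriod n w ∣ r} → _)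
    (rotSetoid n)))

/-- The number of `k`-element subsets of `{1,…,n}` whose elements sum to `r` mod `n`. -/
def SbarCard (n k r : ℕ) : ℕ :=
  ((Finset.Icc 1 n).powerset.filter
    (fun A => A.card = k ∧ (∑ a ∈ A, a) % n = r)).card

/-- The number of `k`-element subsets of `{1,…,n-1}` whose elements sum to `r` mod `n`. -/
def SCard (n k r : ℕ) : ℕ :=
  ((Finset.Icc 1 (n - 1)).powerset.filter
    (fun A => A.card = k ∧ (∑ a ∈ A, a) % n = r)).card

/-- The Ramanujan sum `c_d(r) = ∑_{j ∣ gcd(r,d)} j · μ(d/j)`. -/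
def ramanujanSum (d : ℕ) (r : ℤ) : ℤ :=
  ∑ j ∈ (Int.gcd r d).divisors, (j : ℤ) * ArithmeticFunction.moebius (d / j)

/-!
Both totals are sums over the divisors `d ∣ n` of `2^{n/d}` weighted by the Ramanujan sums
`c_d(r)`, whose divisor sums are `∑_{d ∣ j} c_d(r) = [j ∣ r] · j`.

Necklaces: orbit counting for the rotation action of `ZMod n` gives
`n · ∑_k |N_r(n,k)| = ∑_{w, cop(w) ∣ r} cop(w)`, where the co-period `cop(w)` is the order of
the stabilizer of `w`. Writing `[c ∣ r] · c = ∑_{d ∣ c} c_d(r)` and noting that the words with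
`d ∣ cop(w)` are exactly the `2^{n/d}` words of period `n/d` (subgroups of a cyclic group are
ordered by divisibility of their orders) gives `∑_{d ∣ n} 2^{n/d} c_d(r)`.

Subsets: with `ξ` a primitive `n`-th root of unity, orthogonality gives
`n · |S̄_r(n)| = ∑_{t < n} ξ^{tr} ∏_{i=1}^n (1 + ξ^{-ti})`, and the product is `2^{n/e}` or `0`
according as the order `e` of `ξ^t` is odd or even. Grouping `t` by this order and using
`∑_{ord(ξ^t) = d} ξ^{tr} = c_d(r)` gives `∑_{d ∣ n, d odd} 2^{n/d} c_d(r)`.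

The difference is therefore the sum over the even divisors.
-/

open ArithmeticFunction

theorem ramanujanSum_eq_sum_divisorsAntidiagonal {d : ℕ} (hd : d ≠ 0) (m : ℕ) :
    ramanujanSum d m =
      ∑ x ∈ d.divisorsAntidiagonal, moebius x.1 • if x.2 ∣ m then (x.2 : ℤ) else 0 := by
  have hdiv : (m.gcd d).divisors = {j ∈ d.divisors | j ∣ m} := by
    ext j
    simp [Nat.dvd_gcd_iff, hd, and_comm]
  rw [Nat.sum_divisorsAntidiagonal' (f := fun a b => moebius a • if b ∣ m then (b : ℤ) else 0),
    ramanujanSum, Int.gcd_natCast_natCast, hdiv, sum_filter]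
  refine sum_congr rfl fun j _ => ?_
  split_ifs <;> simp [mul_comm]

theorem sum_divisors_ramanujanSum {j : ℕ} (hj : j ≠ 0) (m : ℕ) :
    ∑ d ∈ j.divisors, ramanujanSum d m = if j ∣ m then (j : ℤ) else 0 :=
  sum_eq_iff_sum_smul_moebius_eq (g := fun j => if j ∣ m then (j : ℤ) else 0) |>.mpr
    (fun _ hd => (ramanujanSum_eq_sum_divisorsAntidiagonal hd.ne' m).symm) j (Nat.pos_of_ne_zero hj)

section RootsOfUnity

variable {K : Type*} [Field K]

theorem sum_range_pow_of_pow_eq_one [DecidableEq K] {x : K} {n : ℕ} (hx : x ^ n = 1) :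
    ∑ t ∈ range n, x ^ t = if x = 1 then (n : K) else 0 := by
  split_ifs with h
  · simp [h]
  · rw [geom_sum_eq h, hx, sub_self, zero_div]

namespace IsPrimitiveRoot

variable {ζ : K} {n : ℕ}

theorem sum_range_inv_pow_mul_pow_pow (hζ : IsPrimitiveRoot ζ n) (hn : 0 < n) {r : ℕ}
    (hr : r < n) (s : ℕ) :
    ∑ t ∈ range n, ((ζ ^ s)⁻¹ * ζ ^ r) ^ t = if s % n = r then (n : K) else 0 := by
  classical
  have hone : (ζ ^ s)⁻¹ * ζ ^ r = 1 ↔ s % n = r := by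
    rw [inv_mul_eq_one₀ (pow_ne_zero s (hζ.ne_zero hn.ne')), (hζ.isOfFinOrder hn.ne').pow_inj_mod,
      ← hζ.eq_orderOf, Nat.mod_eq_of_lt hr, eq_comm]
  rw [sum_range_pow_of_pow_eq_one (by
    rw [mul_pow, inv_pow, ← pow_mul, ← pow_mul, mul_comm s, mul_comm r, pow_mul, pow_mul,
      hζ.pow_eq_one, one_pow, one_pow, inv_one, one_mul])]
  simp only [hone]

theorem sum_filter_pow_eq_one [DecidableEq K] (hζ : IsPrimitiveRoot ζ n) {j : ℕ} (hj : j ∣ n)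
    (hn : 0 < n) (m : ℕ) :
    ∑ t ∈ range n with (ζ ^ t) ^ j = 1, (ζ ^ t) ^ m = if j ∣ m then (j : K) else 0 := by
  obtain ⟨k, rfl⟩ := hj
  have hk0 : 0 < k := Nat.pos_of_mul_pos_left hn
  have hfilter : {t ∈ range (j * k) | (ζ ^ t) ^ j = 1} = (range j).image (· * k) := by
    ext t
    simp only [mem_filter, mem_range, mem_image, ← pow_mul, hζ.pow_eq_one_iff_dvd, mul_comm t j,
      Nat.mul_dvd_mul_iff_left (Nat.pos_of_mul_pos_right hn)]
    constructor
    · rintro ⟨ht, v, rfl⟩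
      exact ⟨v, by nlinarith, mul_comm v k⟩
    · rintro ⟨v, hv, rfl⟩
      exact ⟨by nlinarith, v, mul_comm v k⟩
  have hξ : IsPrimitiveRoot (ζ ^ k) j := hζ.pow hn (mul_comm j k)
  have hpow (v : ℕ) : (ζ ^ (v * k)) ^ m = ((ζ ^ k) ^ m) ^ v := by
    rw [← pow_mul, ← pow_mul, ← pow_mul]; ring_nf
  rw [hfilter, sum_image (fun a _ b _ h => Nat.eq_of_mul_eq_mul_right hk0 h)]
  simp only [hpow]
  rw [sum_range_pow_of_pow_eq_one (by rw [← pow_mul, mul_comm, pow_mul, hξ.pow_eq_one, one_pow])]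
  simp only [hξ.pow_eq_one_iff_dvd]

/-- Both sides have divisor sums `[j ∣ m] · j` over the divisors `j` of `n`, so they agree by
Möbius inversion. -/
theorem sum_filter_orderOf_eq_ramanujanSum (hζ : IsPrimitiveRoot ζ n) (hn : 0 < n) {d : ℕ}
    (hd : d ∣ n) (m : ℕ) :
    ∑ t ∈ range n with orderOf (ζ ^ t) = d, (ζ ^ t) ^ m = ramanujanSum d m := by
  classical
  have hdiv : ∀ j > 0, j ∈ {j | j ∣ n} → ∑ i ∈ j.divisors,
      ∑ t ∈ range n with orderOf (ζ ^ t) = i, (ζ ^ t) ^ m = if j ∣ m then (j : K) else 0 := by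
    intro j hj hjn
    rw [← hζ.sum_filter_pow_eq_one hjn hn m, ← sum_fiberwise_of_maps_to
      (g := fun t => orderOf (ζ ^ t)) (t := j.divisors) (fun t ht => Nat.mem_divisors.mpr
        ⟨orderOf_dvd_of_pow_eq_one (mem_filter.mp ht).2, hj.ne'⟩)]
    refine sum_congr rfl fun i hi => ?_
    rw [filter_filter]
    refine sum_congr (filter_congr fun t _ => ?_) fun _ _ => rfl
    exact ⟨fun h => ⟨orderOf_dvd_iff_pow_eq_one.mp (h ▸ Nat.dvd_of_mem_divisors hi), h⟩,
      And.right⟩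
  have hd0 : d ≠ 0 := ne_zero_of_dvd_ne_zero hn.ne' hd
  rw [← (sum_eq_iff_sum_smul_moebius_eq_on {j | j ∣ n} (fun _ _ h h' => h.trans h')).mp hdiv d
    (Nat.pos_of_ne_zero hd0) hd, ramanujanSum_eq_sum_divisorsAntidiagonal hd0]
  push_cast
  simp [zsmul_eq_mul, apply_ite]

theorem sum_range_mul_pow_eq_sum_ramanujanSum (hζ : IsPrimitiveRoot ζ n) (hn : 0 < n)
    (f : ℕ → K) (m : ℕ) :
    ∑ t ∈ range n, f (orderOf (ζ ^ t)) * (ζ ^ t) ^ m =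
      ∑ d ∈ n.divisors, f d * ramanujanSum d m := by
  rw [← sum_fiberwise_of_maps_to (g := fun t => orderOf (ζ ^ t)) (t := n.divisors)
    (fun t _ => Nat.mem_divisors.mpr ⟨orderOf_dvd_of_pow_eq_one (by
      rw [← pow_mul, mul_comm, pow_mul, hζ.pow_eq_one, one_pow]), hn.ne'⟩)]
  refine sum_congr rfl fun d hd => ?_
  rw [← hζ.sum_filter_orderOf_eq_ramanujanSum hn (Nat.dvd_of_mem_divisors hd), mul_sum]
  exact sum_congr rfl fun t ht => by rw [(mem_filter.mp ht).2]

end IsPrimitiveRoot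

end RootsOfUnity

theorem Function.Periodic.prod_range_mul {M : Type*} [CommMonoid M] {g : ℕ → M} {e : ℕ}
    (hg : Function.Periodic g e) (q : ℕ) :
    ∏ i ∈ range (q * e), g i = (∏ i ∈ range e, g i) ^ q := by
  induction q with
  | zero => simp
  | succ q ih =>
    rw [add_mul, one_mul, prod_range_add, ih, pow_succ]
    congr 1
    exact prod_congr rfl fun i _ => by simpa [add_comm] using hg.nsmul q i

namespace IsPrimitiveRoot

variable {R : Type*} [CommRing R] [IsDomain R] {η : R} {e : ℕ}

/-- Evaluate `X ^ e - 1 = ∏ (X - η ^ (i + 1))` at `-1`. -/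
theorem prod_range_one_add_pow_succ (hη : IsPrimitiveRoot η e) (he : 0 < e) :
    ∏ i ∈ range e, (1 + η ^ (i + 1)) = 1 - (-1) ^ e := by
  have h := congrArg (Polynomial.eval (-1)) (X_pow_sub_C_eq_prod hη he hη.pow_eq_one)
  simp only [Polynomial.eval_sub, Polynomial.eval_pow, Polynomial.eval_X, Polynomial.eval_C,
    Polynomial.eval_prod, ← pow_succ] at h
  have hneg : ∀ i ∈ range e, -1 - η ^ (i + 1) = -1 * (1 + η ^ (i + 1)) := fun _ _ => by ring
  rw [prod_congr rfl hneg, prod_mul_distrib, prod_const, card_range] at h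
  have hsq : ((-1 : R) ^ e) ^ 2 = 1 := by rw [← pow_mul, mul_comm, pow_mul]; simp
  linear_combination (-(-1 : R) ^ e) * h + (1 - ∏ i ∈ range e, (1 + η ^ (i + 1))) * hsq

theorem sum_powerset_Icc_pow_sum {n : ℕ} (hη : IsPrimitiveRoot η e) (hn : 0 < n) (hen : e ∣ n) :
    ∑ A ∈ (Icc 1 n).powerset, η ^ (∑ a ∈ A, a) = if Odd e then 2 ^ (n / e) else 0 := by
  have he : 0 < e := Nat.pos_of_dvd_of_pos hen hn
  have hg : Function.Periodic (fun i => 1 + η ^ (i + 1)) e := fun i => by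
    simp only [add_right_comm i e, pow_add η (i + 1), hη.pow_eq_one, mul_one]
  simp only [← prod_pow_eq_pow_sum, ← prod_one_add]
  rw [← Finset.Ico_add_one_right_eq_Icc, prod_Ico_eq_prod_range, Nat.add_sub_cancel]
  simp only [add_comm 1]
  conv_lhs => rw [← Nat.div_mul_cancel hen]
  rw [hg.prod_range_mul, hη.prod_range_one_add_pow_succ he]
  split_ifs with hodd
  · rw [hodd.neg_one_pow]; norm_num
  · rw [(Nat.not_odd_iff_even.mp hodd).neg_one_pow, sub_self,
      zero_pow (Nat.div_pos (Nat.le_of_dvd hn hen) he).ne']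

end IsPrimitiveRoot

theorem card_filter_sum_mod_mul (n r : ℕ) (hn : 0 < n) (hr : r < n) :
    (#{A ∈ (Icc 1 n).powerset | (∑ a ∈ A, a) % n = r} : ℤ) * n =
      ∑ d ∈ n.divisors with Odd d, 2 ^ (n / d) * ramanujanSum d r := by
  obtain ⟨ξ, hξ⟩ : ∃ ξ : ℂ, IsPrimitiveRoot ξ n := ⟨_, Complex.isPrimitiveRoot_exp n hn.ne'⟩
  have hsubsets (t : ℕ) : ∑ A ∈ (Icc 1 n).powerset, ((ξ ^ t)⁻¹) ^ (∑ a ∈ A, a) =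
      if Odd (orderOf (ξ ^ t)) then (2 : ℂ) ^ (n / orderOf (ξ ^ t)) else 0 :=
    (IsPrimitiveRoot.orderOf (ξ ^ t)).inv.sum_powerset_Icc_pow_sum hn
      (orderOf_dvd_of_pow_eq_one (by rw [← pow_mul, mul_comm, pow_mul, hξ.pow_eq_one, one_pow]))
  apply Int.cast_injective (α := ℂ)
  push_cast
  calc (#{A ∈ (Icc 1 n).powerset | (∑ a ∈ A, a) % n = r} : ℂ) * n
      = ∑ A ∈ (Icc 1 n).powerset, ∑ t ∈ range n, ((ξ ^ (∑ a ∈ A, a))⁻¹ * ξ ^ r) ^ t := by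
        simp only [hξ.sum_range_inv_pow_mul_pow_pow hn hr, sum_ite, sum_const_zero, add_zero,
          sum_const, nsmul_eq_mul]
    _ = ∑ t ∈ range n, (if Odd (orderOf (ξ ^ t)) then (2 : ℂ) ^ (n / orderOf (ξ ^ t)) else 0) *
          (ξ ^ t) ^ r := by
        rw [sum_comm]
        refine sum_congr rfl fun t _ => ?_
        rw [← hsubsets, sum_mul]
        refine sum_congr rfl fun A _ => ?_
        rw [mul_pow, inv_pow, inv_pow, ← pow_mul, ← pow_mul, ← pow_mul, ← pow_mul, mul_comm t,
          mul_comm t]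
    _ = ∑ d ∈ n.divisors, (if Odd d then (2 : ℂ) ^ (n / d) else 0) * ramanujanSum d r :=
        hξ.sum_range_mul_pow_eq_sum_ramanujanSum hn
          (fun e => if Odd e then (2 : ℂ) ^ (n / e) else 0) r
    _ = _ := by
        rw [sum_filter]
        exact sum_congr rfl fun d _ => by split_ifs <;> simp

theorem sum_SbarCard (n r : ℕ) :
    ∑ k ∈ range (n + 1), SbarCard n k r = #{A ∈ (Icc 1 n).powerset | (∑ a ∈ A, a) % n = r} := by
  rw [card_eq_sum_card_fiberwise (f := card) (t := range (n + 1)) fun A hA => ?_]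
  · refine sum_congr rfl fun k _ => ?_
    rw [SbarCard, filter_filter]
    simp only [and_comm]
  · have := card_le_card (mem_powerset.mp (mem_filter.mp hA).1)
    rw [Nat.card_Icc] at this
    exact mem_range.mpr (by omega)

theorem AddAction.card_orbitRel_quotient_mul_card {G X : Type*} [AddGroup G] [Finite G]
    [AddAction G X] [Fintype X] :
    Nat.card (orbitRel.Quotient G X) * Nat.card G = ∑ x : X, Nat.card (stabilizer G x) := by
  classical
  have := Fintype.ofFinite G
  rw [Nat.card_eq_fintype_card, Nat.card_eq_fintype_card,
    ← sum_card_fixedBy_eq_card_orbits_mul_card_addGroup G X]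
  have hfix (g : G) : Fintype.card (fixedBy X g) = ∑ x : X, if g +ᵥ x = x then 1 else 0 := by
    rw [← card_filter, ← Fintype.card_subtype]; rfl
  have hstab (x : X) : Nat.card (stabilizer G x) = ∑ g : G, if g +ᵥ x = x then 1 else 0 := by
    rw [← card_filter, ← Fintype.card_subtype, Nat.card_eq_fintype_card]; rfl
  simp only [hfix, hstab]
  exact sum_comm

theorem AddAction.card_orbitRel_comap_mul_card {G X : Type*} [AddGroup G] [Finite G]
    [AddAction G X] [Fintype X] (P : X → Prop) [DecidablePred P]
    (hP : ∀ (g : G) x, P x → P (g +ᵥ x)) :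
    Nat.card (Quotient ((orbitRel G X).comap (Subtype.val : {x // P x} → X))) * Nat.card G =
      ∑ x with P x, Nat.card (stabilizer G x) := by
  have h := @card_orbitRel_quotient_mul_card G
    (⟨{x | P x}, fun {g x} => hP g x⟩ : SubAddAction G X) _ _ _
    (inferInstanceAs (Fintype {x // P x}))
  rw [orbitRel.Quotient, SubAddAction.orbitRel_of_subAdd] at h
  simp only [SubAddAction.stabilizer_of_subAdd] at h
  rw [sum_subtype (p := P) _ (fun x => mem_filter_univ x)]
  exact h

theorem IsAddCyclic.le_iff_card_dvd {G : Type*} [AddCommGroup G] [IsAddCyclic G] [Finite G]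
    {H K : AddSubgroup G} : K ≤ H ↔ Nat.card K ∣ Nat.card H := by
  refine ⟨AddSubgroup.card_dvd_of_le, fun ⟨c, hc⟩ x hx => ?_⟩
  have hcard (L : AddSubgroup G) (y : G) (hy : y ∈ L) : Nat.card L • y = 0 := by
    simpa only [AddSubmonoidClass.coe_nsmul, ZeroMemClass.coe_zero] using
      congrArg Subtype.val (card_nsmul_eq_zero' (x := (⟨y, hy⟩ : L)))
  -- `H` lies in the kernel of multiplication by `|H|`, which has order `gcd(|G|, |H|) = |H|`.
  have hker : (nsmulAddMonoidHom (Nat.card H) : G →+ G).ker = H := by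
    refine (AddSubgroup.eq_of_le_of_card_ge (fun y hy => hcard H y hy) ?_).symm
    rw [IsAddCyclic.card_nsmulAddMonoidHom_ker, Nat.gcd_eq_right H.card_addSubgroup_dvd_card]
  rw [← hker, AddMonoidHom.mem_ker, nsmulAddMonoidHom_apply, hc, mul_nsmul, hcard K x hx,
    nsmul_zero]

section Translation

open AddAction

/-- Chosen so that `coPeriod n w` is the order of the stabilizer of `w` and `rotSetoid n` is the
orbit relation, both definitionally. -/
abbrev translateAction (G β : Type*) [AddMonoid G] : AddAction G (G → β) where
  vadd t w i := w (i + t)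
  zero_vadd w := funext fun i => congrArg w (add_zero i)
  add_vadd s t w := funext fun i => congrArg w (add_assoc i s t).symm

attribute [local instance] translateAction

theorem mem_stabilizer_translate_iff {G β : Type*} [AddGroup G] {w : G → β} {t : G} :
    t ∈ stabilizer G w ↔ ∀ i, w (i + t) = w i := by
  rw [mem_stabilizer_iff, funext_iff]
  rfl

theorem card_subtype_le_stabilizer {G β : Type*} [AddGroup G] (K : AddSubgroup G)
    [K.FiniteIndex] : Nat.card {w : G → β // K ≤ stabilizer G w} = Nat.card β ^ K.index := by
  have hrel (w : G → β) : K ≤ stabilizer G w ↔ QuotientAddGroup.leftRel K ≤ Setoid.ker w := by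
    simp only [SetLike.le_def, mem_stabilizer_translate_iff, Setoid.le_def,
      QuotientAddGroup.leftRel_apply, Setoid.ker_def]
    refine ⟨fun h a b hab => ?_, fun h k hk i => (h (by simpa using hk)).symm⟩
    simpa using (h hab a).symm
  exact (Nat.card_congr ((Equiv.subtypeEquivRight hrel).trans (Setoid.liftEquiv _))).trans
    (Nat.card_fun (α := G ⧸ K))

variable {n : ℕ}

theorem coPeriod_eq_card_stabilizer (w : ZMod n → Bool) :
    coPeriod n w = Nat.card (stabilizer (ZMod n) w) :=
  Nat.card_congr (Equiv.subtypeEquivRight fun _ => mem_stabilizer_translate_iff.symm)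

theorem coPeriod_dvd (w : ZMod n → Bool) : coPeriod n w ∣ n := by
  have h := AddSubgroup.card_addSubgroup_dvd_card (stabilizer (ZMod n) w)
  rwa [Nat.card_zmod, ← coPeriod_eq_card_stabilizer] at h

theorem coPeriod_vadd (t : ZMod n) (w : ZMod n → Bool) : coPeriod n (t +ᵥ w) = coPeriod n w := by
  simp only [coPeriod_eq_card_stabilizer]
  exact Nat.card_congr (stabilizerEquivStabilizerOfOrbitRel (mem_orbit w t)).toEquiv

theorem onesCount_vadd (t : ZMod n) (w : ZMod n → Bool) :
    onesCount n (t +ᵥ w) = onesCount n w :=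
  Nat.card_congr ((Equiv.addRight t).subtypeEquiv fun _ => Iff.rfl)

theorem onesCount_le [NeZero n] (w : ZMod n → Bool) : onesCount n w ≤ n :=
  (Finite.card_subtype_le _).trans (Nat.card_zmod n).le

theorem rotSetoid_eq_orbitRel : rotSetoid n = orbitRel (ZMod n) (ZMod n → Bool) :=
  Setoid.ext fun _ _ => ⟨fun ⟨t, h⟩ => ⟨t, funext fun i => (h i).symm⟩,
    fun ⟨t, h⟩ => ⟨t, fun i => congrFun h.symm i⟩⟩

theorem NrCard_mul_eq_sum_coPeriod [NeZero n] (k r : ℕ) :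
    NrCard n k r * n = ∑ w with onesCount n w = k ∧ coPeriod n w ∣ r, coPeriod n w := by
  have h := card_orbitRel_comap_mul_card (G := ZMod n)
    (fun w => onesCount n w = k ∧ coPeriod n w ∣ r)
    fun t w => by rw [onesCount_vadd, coPeriod_vadd]; exact id
  rw [Nat.card_zmod, ← rotSetoid_eq_orbitRel] at h
  exact h.trans (sum_congr rfl fun w _ => (coPeriod_eq_card_stabilizer w).symm)

theorem sum_NrCard_mul_eq_sum_coPeriod [NeZero n] (r : ℕ) :
    ∑ k ∈ range (n + 1), NrCard n k r * n = ∑ w with coPeriod n w ∣ r, coPeriod n w := by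
  have hfilter (k : ℕ) : univ.filter (fun w => onesCount n w = k ∧ coPeriod n w ∣ r) =
      {w ∈ univ.filter (coPeriod n · ∣ r) | onesCount n w = k} := by
    ext w; simp [and_comm]
  simp only [NrCard_mul_eq_sum_coPeriod, hfilter]
  exact sum_fiberwise_of_maps_to
    (fun w _ => mem_range.mpr (Nat.lt_succ_of_le (onesCount_le w))) _

theorem card_zmultiples_natCast_div [NeZero n] {d : ℕ} (hd : d ∣ n) :
    Nat.card (AddSubgroup.zmultiples ((n / d : ℕ) : ZMod n)) = d := by
  rw [Nat.card_zmultiples, ZMod.addOrderOf_coe _ (NeZero.ne n),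
    Nat.gcd_eq_right (Nat.div_dvd_of_dvd hd), Nat.div_div_self hd (NeZero.ne n)]

theorem card_filter_dvd_coPeriod [NeZero n] {d : ℕ} (hd : d ∣ n) :
    #{w : ZMod n → Bool | d ∣ coPeriod n w} = 2 ^ (n / d) := by
  set K := AddSubgroup.zmultiples ((n / d : ℕ) : ZMod n)
  have hK : Nat.card K = d := card_zmultiples_natCast_div hd
  have hdvd (w : ZMod n → Bool) : d ∣ coPeriod n w ↔ K ≤ stabilizer (ZMod n) w := by
    rw [coPeriod_eq_card_stabilizer, IsAddCyclic.le_iff_card_dvd, hK]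
  have hindex : K.index = n / d := by
    have := K.card_mul_index
    rw [hK, Nat.card_zmod] at this
    exact Nat.eq_div_of_mul_eq_right (ne_zero_of_dvd_ne_zero (NeZero.ne n) hd) this
  rw [← Fintype.card_subtype, ← Nat.card_eq_fintype_card,
    Nat.card_congr (Equiv.subtypeEquivRight hdvd), card_subtype_le_stabilizer,
    Nat.card_eq_fintype_card, Fintype.card_bool, hindex]

theorem sum_filter_coPeriod_dvd [NeZero n] (r : ℕ) :
    ∑ w : ZMod n → Bool with coPeriod n w ∣ r, (coPeriod n w : ℤ) =
      ∑ d ∈ n.divisors, 2 ^ (n / d) * ramanujanSum d r := by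
  have hcop (w : ZMod n → Bool) : (if coPeriod n w ∣ r then (coPeriod n w : ℤ) else 0) =
      ∑ d ∈ n.divisors with d ∣ coPeriod n w, ramanujanSum d r := by
    have h0 : coPeriod n w ≠ 0 := by
      rw [coPeriod_eq_card_stabilizer]; exact Nat.card_pos.ne'
    rw [Nat.divisors_filter_dvd_of_dvd (NeZero.ne n) (coPeriod_dvd w),
      sum_divisors_ramanujanSum h0]
  rw [sum_filter, sum_congr rfl fun w _ => hcop w, sum_comm' (t' := n.divisors)
    (s' := fun d => {w | d ∣ coPeriod n w}) (fun w d => by simp [and_comm])]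
  refine sum_congr rfl fun d hd => ?_
  rw [sum_const, card_filter_dvd_coPeriod (Nat.dvd_of_mem_divisors hd), nsmul_eq_mul]
  push_cast
  ring

end Translation

/-- `(∑_k |Nᵣ(n,k)|) - (∑_k |S̄ᵣ(n,k)|) = (1/n) ∑_{d ∣ n, d even} 2^{n/d} c_d(r)`,
and in particular the difference vanishes when `n` is odd. -/
theorem Nr_total_sub_Sbar_total (n r : ℕ) (hn : 0 < n) (hr : r < n) :
    ((∑ k ∈ Finset.range (n + 1), (NrCard n k r : ℤ)) -
        ∑ k ∈ Finset.range (n + 1), (SbarCard n k r : ℤ)) * n =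
      (∑ d ∈ n.divisors.filter (fun d => Even d), 2 ^ (n / d) * ramanujanSum d r) ∧
    (Odd n → ∑ k ∈ Finset.range (n + 1), NrCard n k r =
      ∑ k ∈ Finset.range (n + 1), SbarCard n k r) := by
  have : NeZero n := ⟨hn.ne'⟩
  have hNr : (∑ k ∈ range (n + 1), (NrCard n k r : ℤ)) * n =
      ∑ d ∈ n.divisors, 2 ^ (n / d) * ramanujanSum d r := by
    rw [sum_mul, ← sum_filter_coPeriod_dvd]
    exact_mod_cast sum_NrCard_mul_eq_sum_coPeriod r
  have hSbar : (∑ k ∈ range (n + 1), (SbarCard n k r : ℤ)) * n =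
      ∑ d ∈ n.divisors with ¬Even d, 2 ^ (n / d) * ramanujanSum d r := by
    simp only [Nat.not_even_iff_odd, ← card_filter_sum_mod_mul n r hn hr, ← sum_SbarCard]
    push_cast
    rfl
  have hdiff : ((∑ k ∈ range (n + 1), (NrCard n k r : ℤ)) -
      ∑ k ∈ range (n + 1), (SbarCard n k r : ℤ)) * n =
      ∑ d ∈ n.divisors with Even d, 2 ^ (n / d) * ramanujanSum d r := by
    rw [sub_mul, hNr, hSbar, ← sum_filter_add_sum_filter_not n.divisors Even,
      add_sub_cancel_right]
  refine ⟨hdiff, fun hodd => ?_⟩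
  have hno_even : {d ∈ n.divisors | Even d} = ∅ := filter_eq_empty_iff.mpr fun d hd =>
    Nat.not_even_iff_odd.mpr (hodd.of_dvd_nat (Nat.dvd_of_mem_divisors hd))
  rw [hno_even, sum_empty, mul_eq_zero, sub_eq_zero] at hdiff
  exact_mod_cast hdiff.resolve_right (by exact_mod_cast hn.ne')
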